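/- arXiv:2508.01257 — 5 statements merged into one kernel-verified Lean document; each statement's English description precedes it below -/
import Mathlib

section
/- For every node v and every nonnegative integer i', the truncation error satisfies π(v) − π_{≥i'}(v) ≤ Σ_{i=0}^{i'-1} (α/n)(1-α)^i Δ_in^i ≤ (α/n) · i' · max{((1-α)Δ_in)^{i'}, 1}, where π_{≥i'}(v) = Σ_{i=i'}^∞ π_i(v). -/
/-!
Let `n = |V|`. The walk from the uniform start keeps mass at most `(1-α)^i` at level `i`, so the
`π_i(v)` are dominated by a geometric series and `π(v) - π_{≥i'}(v)` is the finite sum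
`Σ_{i<i'} π_i(v)`. At a single node the level-`i` mass is at most `(1/n)((1-α)Δ_in)^i`:
one step collects mass from at most `Δ_in` in-neighbours, each passing on at most a `(1-α)`
fraction of its own. Finally `r^i ≤ max (r^{i'}) 1` for `i < i'`.
-/

open Finset MeasureTheory

variable {V : Type*}

/-- Out-neighbors of `u` in the directed graph with adjacency `E`. -/
def outNbrs [Fintype V] (E : V → V → Bool) (u : V) : Finset V :=
  Finset.univ.filter (fun v => E u v)

/-- In-neighbors of `v`. -/
def inNbrs [Fintype V] (E : V → V → Bool) (v : V) : Finset V :=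
  Finset.univ.filter (fun u => E u v)

/-- Out-degree. -/
def dout [Fintype V] (E : V → V → Bool) (u : V) : ℕ := (outNbrs E u).card

/-- In-degree. -/
def din [Fintype V] (E : V → V → Bool) (v : V) : ℕ := (inNbrs E v).card

/-- One-step transition probability of the simple random walk. -/
noncomputable def step [Fintype V] (E : V → V → Bool) (u v : V) : ℝ :=
  if E u v then 1 / (dout E u : ℝ) else 0

/-- Sub-probability that an `α`-discounted random walk started from distribution `μ`
is still alive and located at `v` after `i` steps. -/
noncomputable def alive [Fintype V] (E : V → V → Bool) (α : ℝ) (μ : V → ℝ) : ℕ → V → ℝ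
  | 0 => μ
  | (i+1) => fun v => ∑ u, (1 - α) * step E u v * alive E α μ i u

/-- The uniform distribution on `V`. -/
noncomputable def unif (V : Type*) [Fintype V] : V → ℝ := fun _ => 1 / (Fintype.card V : ℝ)

/-- `i`-hop PageRank: probability that an `α`-discounted walk from a uniformly random
node terminates at `v` after exactly `i` steps. -/
noncomputable def piHop [Fintype V] (E : V → V → Bool) (α : ℝ) (i : ℕ) (v : V) : ℝ :=
  α * alive E α (unif V) i v

/-- PageRank centrality of `v`. -/
noncomputable def pr [Fintype V] (E : V → V → Bool) (α : ℝ) (v : V) : ℝ :=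
  ∑' i : ℕ, piHop E α i v

/-- Personalized PageRank `π(s,v)`: probability an `α`-discounted walk from `s`
terminates at `v`. -/
noncomputable def ppr [Fintype V] [DecidableEq V] (E : V → V → Bool) (α : ℝ) (s v : V) : ℝ :=
  ∑' i : ℕ, α * alive E α (fun w => if w = s then 1 else 0) i v

/-- Distribution of the simple (non-discounted) random walk after `i` steps,
started from distribution `μ`. -/
noncomputable def srw [Fintype V] (E : V → V → Bool) (μ : V → ℝ) : ℕ → V → ℝ
  | 0 => μ
  | (i+1) => fun v => ∑ u, step E u v * srw E μ i u

/-- Truncated-tail PageRank `π_{≥i'}(v) = Σ_{i ≥ i'} π_i(v)`. -/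
noncomputable def prGe [Fintype V] (E : V → V → Bool) (α : ℝ) (i' : ℕ) (v : V) : ℝ :=
  ∑' i : ℕ, piHop E α (i' + i) v

/-- Residues of the deterministic level-wise push process from target `t`. -/
noncomputable def rlev [Fintype V] [DecidableEq V] (E : V → V → Bool) (α : ℝ) (t : V) :
    ℕ → V → ℝ
  | 0 => fun w => if w = t then 1 else 0
  | (i+1) => fun u => ∑ v ∈ outNbrs E u, (1 - α) * rlev E α t i v / (dout E u : ℝ)

section truncation

variable [Fintype V] (E : V → V → Bool) {α : ℝ}

lemma step_nonneg (u v : V) : 0 ≤ step E u v := by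
  unfold step; split <;> positivity

lemma step_le_one (u v : V) : step E u v ≤ 1 := by
  unfold step
  split_ifs with h
  · have hu : 1 ≤ dout E u := Finset.card_pos.mpr ⟨v, by simp [outNbrs, h]⟩
    exact div_le_one_of_le₀ (by exact_mod_cast hu) (by positivity)
  · exact zero_le_one

/-- With `1 / 0 = 0`, a node without out-neighbours passes on no mass at all. -/
lemma sum_step_le_one (u : V) : ∑ v, step E u v ≤ 1 := by
  have h : ∑ v, step E u v = (dout E u : ℝ) * (1 / (dout E u : ℝ)) := by
    rw [← nsmul_eq_mul, dout, ← Finset.sum_const, outNbrs, Finset.sum_filter]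
    rfl
  rw [h, mul_one_div]
  exact div_self_le_one _

section alive

variable (hα : α ≤ 1) {μ : V → ℝ} (hμ : ∀ w, 0 ≤ μ w)
include hα hμ

lemma alive_nonneg (i : ℕ) (v : V) : 0 ≤ alive E α μ i v := by
  induction i generalizing v with
  | zero => exact hμ v
  | succ i ih =>
    exact Finset.sum_nonneg fun u _ =>
      mul_nonneg (mul_nonneg (by linarith) (step_nonneg E u v)) (ih u)

lemma sum_alive_le (i : ℕ) : ∑ w, alive E α μ i w ≤ (1 - α) ^ i * ∑ w, μ w := by
  induction i with
  | zero => simp [alive]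
  | succ i ih =>
    have hpush : ∀ u, ∑ w, (1 - α) * step E u w * alive E α μ i u
        ≤ (1 - α) * alive E α μ i u := fun u => by
      rw [← Finset.sum_mul, ← Finset.mul_sum, mul_right_comm]
      exact mul_le_of_le_one_right (mul_nonneg (by linarith) (alive_nonneg E hα hμ i u))
        (sum_step_le_one E u)
    calc ∑ w, alive E α μ (i + 1) w
        = ∑ u, ∑ w, (1 - α) * step E u w * alive E α μ i u := Finset.sum_comm
      _ ≤ ∑ u, (1 - α) * alive E α μ i u := Finset.sum_le_sum fun u _ => hpush u
      _ ≤ (1 - α) ^ (i + 1) * ∑ w, μ w := by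
        rw [← Finset.mul_sum, pow_succ', mul_assoc]
        exact mul_le_mul_of_nonneg_left ih (by linarith)

lemma alive_le_of_din_le {Δin : ℕ} (hΔ : ∀ w, din E w ≤ Δin) {C : ℝ} (hC : ∀ w, μ w ≤ C)
    (i : ℕ) (v : V) : alive E α μ i v ≤ C * ((1 - α) * Δin) ^ i := by
  induction i generalizing v with
  | zero => simpa [alive] using hC v
  | succ i ih =>
    set B := C * ((1 - α) * Δin) ^ i
    have hB : 0 ≤ B := (alive_nonneg E hα hμ i v).trans (ih v)
    have hterm : ∀ u, (1 - α) * step E u v * alive E α μ i u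
        ≤ if E u v then (1 - α) * B else 0 := fun u => by
      split_ifs with h
      · rw [mul_assoc]
        exact mul_le_mul_of_nonneg_left
          ((mul_le_of_le_one_left (alive_nonneg E hα hμ i u) (step_le_one E u v)).trans (ih u))
          (by linarith)
      · simp [step, h]
    calc alive E α μ (i + 1) v = ∑ u, (1 - α) * step E u v * alive E α μ i u := rfl
      _ ≤ ∑ u, if E u v then (1 - α) * B else 0 := Finset.sum_le_sum fun u _ => hterm u
      _ = din E v * ((1 - α) * B) := by
        rw [Finset.sum_ite, Finset.sum_const_zero, add_zero, Finset.sum_const, nsmul_eq_mul]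
        rfl
      _ ≤ Δin * ((1 - α) * B) :=
        mul_le_mul_of_nonneg_right (by exact_mod_cast hΔ v) (mul_nonneg (by linarith) hB)
      _ = C * ((1 - α) * Δin) ^ (i + 1) := by ring

end alive

lemma unif_nonneg (w : V) : 0 ≤ unif V w := by
  unfold unif; positivity

lemma piHop_nonneg (hα0 : 0 ≤ α) (hα1 : α ≤ 1) (i : ℕ) (v : V) :
    0 ≤ piHop E α i v :=
  mul_nonneg hα0 (alive_nonneg E hα1 unif_nonneg i v)

lemma summable_piHop (hα0 : 0 < α) (hα1 : α ≤ 1) (v : V) :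
    Summable fun i => piHop E α i v := by
  refine .of_nonneg_of_le (piHop_nonneg E hα0.le hα1 · v) (fun i => ?_)
    ((summable_geometric_of_lt_one (r := 1 - α) (by linarith) (by linarith)).mul_left
      (α * ∑ w, unif V w))
  have hmass : alive E α (unif V) i v ≤ (1 - α) ^ i * ∑ w, unif V w :=
    (Finset.single_le_sum (fun w _ => alive_nonneg E hα1 unif_nonneg i w)
      (Finset.mem_univ v)).trans (sum_alive_le E hα1 unif_nonneg i)
  calc piHop E α i v ≤ α * ((1 - α) ^ i * ∑ w, unif V w) :=
        mul_le_mul_of_nonneg_left hmass hα0.le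
    _ = (α * ∑ w, unif V w) * (1 - α) ^ i := by ring

lemma pr_sub_prGe {v : V} (hsum : Summable fun i => piHop E α i v) (i' : ℕ) :
    pr E α v - prGe E α i' v = ∑ i ∈ range i', piHop E α i v := by
  rw [pr, prGe, ← hsum.sum_add_tsum_nat_add i']
  simp only [add_comm _ i', add_sub_cancel_right]

lemma piHop_le_of_din_le (hα0 : 0 ≤ α) (hα1 : α ≤ 1) {Δin : ℕ}
    (hΔ : ∀ w, din E w ≤ Δin) (i : ℕ) (v : V) :
    piHop E α i v ≤ α / Fintype.card V * (1 - α) ^ i * (Δin : ℝ) ^ i := by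
  have h := alive_le_of_din_le E hα1 unif_nonneg hΔ (C := 1 / Fintype.card V)
    (fun _ => le_rfl) i v
  calc piHop E α i v ≤ α * (1 / Fintype.card V * ((1 - α) * Δin) ^ i) :=
        mul_le_mul_of_nonneg_left h hα0
    _ = α / Fintype.card V * (1 - α) ^ i * (Δin : ℝ) ^ i := by rw [mul_pow]; ring

lemma pow_le_max_pow_one {r : ℝ} (hr : 0 ≤ r) {i k : ℕ} (hik : i ≤ k) :
    r ^ i ≤ max (r ^ k) 1 := by
  rcases le_or_gt r 1 with h | h
  · exact (pow_le_one₀ hr h).trans (le_max_right _ _)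
  · exact (pow_le_pow_right₀ h.le hik).trans (le_max_left _ _)

lemma sum_range_mul_pow_le {c r : ℝ} (hc : 0 ≤ c) (hr : 0 ≤ r) (k : ℕ) :
    ∑ i ∈ range k, c * r ^ i ≤ c * k * max (r ^ k) 1 := by
  calc ∑ i ∈ range k, c * r ^ i ≤ ∑ _i ∈ range k, c * max (r ^ k) 1 :=
        Finset.sum_le_sum fun i hi =>
          mul_le_mul_of_nonneg_left (pow_le_max_pow_one hr (mem_range.mp hi).le) hc
    _ = c * k * max (r ^ k) 1 := by
      rw [Finset.sum_const, card_range, nsmul_eq_mul]; ring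

end truncation

theorem truncation_error_bound_general [Fintype V]
    (E : V → V → Bool) (α : ℝ) (hα0 : 0 < α) (hα1 : α < 1)
    (Δin : ℕ) (hΔ : ∀ w : V, din E w ≤ Δin) (i' : ℕ) (v : V) :
    pr E α v - prGe E α i' v ≤
      ∑ i ∈ Finset.range i',
        (α / (Fintype.card V : ℝ)) * (1 - α) ^ i * (Δin : ℝ) ^ i ∧
    ∑ i ∈ Finset.range i',
        (α / (Fintype.card V : ℝ)) * (1 - α) ^ i * (Δin : ℝ) ^ i ≤
      (α / (Fintype.card V : ℝ)) * (i' : ℝ) *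
        max (((1 - α) * (Δin : ℝ)) ^ i') 1 := by
  constructor
  · rw [pr_sub_prGe E (summable_piHop E hα0 hα1.le v) i']
    exact Finset.sum_le_sum fun i _ => piHop_le_of_din_le E hα0.le hα1.le hΔ i v
  · simp_rw [mul_assoc, ← mul_pow]
    rw [← mul_assoc]
    exact sum_range_mul_pow_le (by positivity) (mul_nonneg (by linarith) (Nat.cast_nonneg _)) i'

theorem truncation_error_bound [Fintype V] [Nonempty V]
    (E : V → V → Bool) (α : ℝ) (hα0 : 0 < α) (hα1 : α < 1)
    (hout : ∀ u : V, 0 < dout E u)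
    (Δin : ℕ) (hΔ : ∀ w : V, din E w ≤ Δin) (i' : ℕ) (v : V) :
    pr E α v - prGe E α i' v ≤
      ∑ i ∈ Finset.range i',
        (α / (Fintype.card V : ℝ)) * (1 - α) ^ i * (Δin : ℝ) ^ i ∧
    ∑ i ∈ Finset.range i',
        (α / (Fintype.card V : ℝ)) * (1 - α) ^ i * (Δin : ℝ) ^ i ≤
      (α / (Fintype.card V : ℝ)) * (i' : ℝ) *
        max (((1 - α) * (Δin : ℝ)) ^ i') 1 :=
  truncation_error_bound_general E α hα0 hα1 Δin hΔ i' v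
end

section
/- In the modified Monte Carlo algorithm that simulates an α-discounted random walk until termination, then continues for exactly i' additional steps and records the final node scaled by (1-α)^{i'}, each per-walk estimator X(v) satisfies E[X(v)] = π_{≥i'}(v) = Σ_{i=i'}^∞ π_i(v) for every node v. -/
open Finset MeasureTheory

variable {V : Type*}

lemma alive_add_srw [Fintype V] (E : V → V → Bool) (α : ℝ) (μ : V → ℝ) :
    ∀ (k i : ℕ) (v : V),
      alive E α μ (k + i) v = (1 - α) ^ k * srw E (fun u => alive E α μ i u) k v := by
  intro k
  induction k with
  | zero => intro i v; simp [srw]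
  | succ k ih =>
      intro i v
      have h : k + 1 + i = (k + i) + 1 := by omega
      rw [h]
      show (∑ u, (1 - α) * step E u v * alive E α μ (k + i) u) = _
      simp only [ih, srw, Finset.mul_sum, pow_succ]
      apply Finset.sum_congr rfl
      intro u _
      ring

theorem monte_carlo_estimator_unbiased [Fintype V] [Nonempty V]
    (E : V → V → Bool) (α : ℝ) (hα0 : 0 < α) (hα1 : α < 1)
    (hout : ∀ u : V, 0 < dout E u) (i' : ℕ) (v : V) :
    (1 - α) ^ i' *
      (∑' i : ℕ, α * srw E (fun u => alive E α (unif V) i u) i' v) =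
    prGe E α i' v := by
  unfold prGe piHop
  have : ∀ i : ℕ, α * alive E α (unif V) (i' + i) v
      = (1 - α) ^ i' * (α * srw E (fun u => alive E α (unif V) i u) i' v) := by
    intro i
    rw [alive_add_srw]
    ring
  rw [tsum_congr this, tsum_mul_left, tsum_mul_left, tsum_mul_left]
end

section
/- For the randomized rounding push process, the expected residues are dominated by the deterministic push residues: E[r̂_i^-(v)] ≤ r_i^-(v) for all levels i ∈ [0, L−1] and all nodes v, where r̂ denotes residues in the randomized process (with rounding operations that preserve residues in expectation and pushes restricted to a subset V_{<ε}) and r denotes residues in the deterministic push process applying pushes to all nodes. -/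
open Finset MeasureTheory

variable {V : Type*}

lemma rlev_nonneg [Fintype V] [DecidableEq V] (E : V → V → Bool) (α : ℝ) (hα1 : α < 1)
    (t : V) : ∀ i v, 0 ≤ rlev E α t i v := by
  intro i
  induction i with
  | zero => intro v; simp only [rlev]; positivity
  | succ i ih =>
    intro u
    simp only [rlev]
    apply Finset.sum_nonneg
    intro v _
    have := ih v
    have h1 : (0:ℝ) ≤ 1 - α := by linarith
    positivity

theorem randomized_residues_dominated [Fintype V] [DecidableEq V]
    {Ω : Type*} {m0 : MeasurableSpace Ω} (P : Measure Ω) [IsProbabilityMeasure P]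
    (E : V → V → Bool) (α : ℝ) (hα0 : 0 < α) (hα1 : α < 1)
    (hout : ∀ u : V, 0 < dout E u)
    (t : V) (Vlt : Finset V) (L : ℕ)
    (rminus rplus : ℕ → V → Ω → ℝ)
    (hr0 : ∀ v ω, rminus 0 v ω = if v = t then 1 else 0)
    (hnn : ∀ i v ω, 0 ≤ rplus i v ω)
    (hintm : ∀ i v, Integrable (rminus i v) P)
    (hintp : ∀ i v, Integrable (rplus i v) P)
    (hround : ∀ i v, (∫ ω, rplus i v ω ∂P) = ∫ ω, rminus i v ω ∂P)
    (hpush : ∀ i u ω,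
      rminus (i+1) u ω =
        ∑ v ∈ outNbrs E u ∩ Vlt, (1 - α) * rplus i v ω / (dout E u : ℝ)) :
    ∀ i, i ≤ L - 1 → ∀ v, (∫ ω, rminus i v ω ∂P) ≤ rlev E α t i v := by
  have key : ∀ i v, (∫ ω, rminus i v ω ∂P) ≤ rlev E α t i v := by
    intro i
    induction i with
    | zero =>
      intro v
      simp only [hr0, rlev]
      rcases eq_or_ne v t with h | h <;> simp [h]
    | succ i ih =>
      intro u
      have h1 : (0:ℝ) ≤ 1 - α := by linarith
      have hint : ∀ v ∈ outNbrs E u ∩ Vlt,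
          Integrable (fun ω => (1 - α) * rplus i v ω / (dout E u : ℝ)) P :=
        fun v _ => ((hintp i v).const_mul _).div_const _
      calc (∫ ω, rminus (i+1) u ω ∂P)
          = ∫ ω, ∑ v ∈ outNbrs E u ∩ Vlt, (1 - α) * rplus i v ω / (dout E u : ℝ) ∂P := by
            simp only [hpush]
        _ = ∑ v ∈ outNbrs E u ∩ Vlt, ∫ ω, (1 - α) * rplus i v ω / (dout E u : ℝ) ∂P :=
            integral_finset_sum _ hint
        _ = ∑ v ∈ outNbrs E u ∩ Vlt, (1 - α) * (∫ ω, rminus i v ω ∂P) / (dout E u : ℝ) := by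
            refine Finset.sum_congr rfl fun v _ => ?_
            rw [integral_div, MeasureTheory.integral_const_mul, hround]
        _ ≤ ∑ v ∈ outNbrs E u ∩ Vlt, (1 - α) * rlev E α t i v / (dout E u : ℝ) := by
            refine Finset.sum_le_sum fun v _ => ?_
            gcongr
            exact ih v
        _ ≤ ∑ v ∈ outNbrs E u, (1 - α) * rlev E α t i v / (dout E u : ℝ) := by
            refine Finset.sum_le_sum_of_subset_of_nonneg (Finset.inter_subset_left) ?_
            intro v _ _
            have := rlev_nonneg E α hα1 t i v
            positivity
        _ = rlev E α t (i+1) u := by simp [rlev]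
  exact fun i _ v => key i v
end

section
/- Under the pushback invariant structure: any pushback operation at level i on node v leaves the quantity Y = Σ_{i=0}^{L-1} Σ_{v∈V} (p̂_i(v)/n + π(v) r̂_i(v)) unchanged, provided i ≤ L−2. Specifically, if the operation increments p̂_i(v) by α·r, increments r̂_{i+1}(u) by (1-α)r/d_out(u) for each u ∈ N_in(v), and decrements r̂_i(v) by r, then the net change of Y equals r·(α/n + Σ_{u∈N_in(v)} (1-α)π(u)/d_out(u) − π(v)) = 0. -/
open Finset MeasureTheory

variable {V : Type*}

theorem pushback_leaves_Y_invariant [Fintype V] [DecidableEq V] [Nonempty V]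
    (E : V → V → Bool) (α : ℝ) (hα0 : 0 < α) (hα1 : α < 1)
    (hout : ∀ u : V, 0 < dout E u)
    (π : V → ℝ)
    (hrec : ∀ w : V, π w =
      (∑ u ∈ inNbrs E w, (1 - α) * π u / (dout E u : ℝ)) + α / (Fintype.card V : ℝ))
    (phat rhat : ℕ → V → ℝ) (L i : ℕ) (hi : i + 2 ≤ L) (v : V) (r : ℝ) (hr : 0 ≤ r) :
    (∑ j ∈ Finset.range L, ∑ w : V,
      ((if j = i ∧ w = v then phat j w + α * r else phat j w) / (Fintype.card V : ℝ) +
        π w *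
          (if j = i ∧ w = v then rhat j w - r
           else if j = i + 1 ∧ E w v then rhat j w + (1 - α) * r / (dout E w : ℝ)
           else rhat j w))) =
    ∑ j ∈ Finset.range L, ∑ w : V,
      (phat j w / (Fintype.card V : ℝ) + π w * rhat j w) := by
  have hi1 : i < L := by omega
  have hi2 : i + 1 < L := by omega
  rw [← sub_eq_zero, ← Finset.sum_sub_distrib]
  have key : ∀ j ∈ Finset.range L, ((∑ w : V,
      ((if j = i ∧ w = v then phat j w + α * r else phat j w) / (Fintype.card V : ℝ) +
        π w *
          (if j = i ∧ w = v then rhat j w - r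
           else if j = i + 1 ∧ E w v then rhat j w + (1 - α) * r / (dout E w : ℝ)
           else rhat j w))) -
      ∑ w : V, (phat j w / (Fintype.card V : ℝ) + π w * rhat j w)) =
      ((if j = i then α * r / (Fintype.card V : ℝ) - π v * r else 0) +
       (if j = i + 1 then ∑ u ∈ inNbrs E v, r * ((1 - α) * π u / (dout E u : ℝ)) else 0)) := by
    intro j _
    rw [← Finset.sum_sub_distrib]
    rcases eq_or_ne j i with hji | hji
    · obtain rfl : i = j := hji.symm
      rw [if_pos rfl, if_neg (by omega), add_zero]
      have hc : ∀ w ∈ Finset.univ, ((if i = i ∧ w = v then phat i w + α * r else phat i w) / (Fintype.card V : ℝ) +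
          π w *
            (if i = i ∧ w = v then rhat i w - r
             else if i = i + 1 ∧ E w v then rhat i w + (1 - α) * r / (dout E w : ℝ)
             else rhat i w) -
          (phat i w / (Fintype.card V : ℝ) + π w * rhat i w)) =
          (if w = v then α * r / (Fintype.card V : ℝ) - π v * r else 0) := by
        intro w _
        have hB : ¬ (i = i + 1 ∧ E w v = true) := by rintro ⟨h, -⟩; omega
        rw [if_neg hB]
        split_ifs with h1 h2 h3
        · subst h2; ring
        · exact absurd h1.2 h2
        · exact absurd ⟨rfl, h3⟩ h1
        · ring
      rw [Finset.sum_congr rfl hc, Finset.sum_ite_eq' Finset.univ v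
        (fun _ => α * r / (Fintype.card V : ℝ) - π v * r), if_pos (Finset.mem_univ v)]
    · rw [if_neg hji]
      rcases eq_or_ne j (i + 1) with rfl | hj1
      · rw [if_pos rfl, zero_add]
        have : ∀ w ∈ Finset.univ, ((if (i+1) = i ∧ w = v then phat (i+1) w + α * r else phat (i+1) w) / (Fintype.card V : ℝ) +
            π w *
              (if (i+1) = i ∧ w = v then rhat (i+1) w - r
               else if (i+1) = i + 1 ∧ E w v then rhat (i+1) w + (1 - α) * r / (dout E w : ℝ)
               else rhat (i+1) w) -
            (phat (i+1) w / (Fintype.card V : ℝ) + π w * rhat (i+1) w)) =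
            (if E w v then r * ((1 - α) * π w / (dout E w : ℝ)) else 0) := by
          intro w _
          have hne : ¬ ((i+1) = i ∧ w = v) := by rintro ⟨h, -⟩; omega
          rw [if_neg hne, if_neg hne]
          by_cases hE : E w v
          · rw [if_pos ⟨rfl, hE⟩, if_pos hE]; ring
          · rw [if_neg (fun h => hE h.2), if_neg hE]; ring
        rw [Finset.sum_congr rfl this, Finset.sum_ite, Finset.sum_const_zero, add_zero]
        rfl
      · rw [if_neg hj1, add_zero]
        apply Finset.sum_eq_zero
        intro w _
        rw [if_neg (fun h => hji h.1), if_neg (fun h => hji h.1), if_neg (fun h => hj1 h.1)]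
        ring
  rw [Finset.sum_congr rfl key, Finset.sum_add_distrib,
    Finset.sum_ite_eq' (Finset.range L) i, Finset.sum_ite_eq' (Finset.range L) (i+1),
    if_pos (Finset.mem_range.mpr hi1), if_pos (Finset.mem_range.mpr hi2),
    ← Finset.mul_sum]
  have h := hrec v
  have : ∑ u ∈ inNbrs E v, (1 - α) * π u / (dout E u : ℝ) = π v - α / (Fintype.card V : ℝ) := by
    linarith
  rw [this]
  ring
end

section
/- If an estimator X(v) satisfies E[X(v)] = π'(v) with 0 ≤ X(v) ≤ (1-α)^{i'} per sample, and n_r = ⌈3200(1-α)^{i'} ln(40n)/ε⌉ independent samples are averaged to form π̃(v), then for each v with π'(v) ≥ ε/2, Pr{|π̃(v) − π'(v)| ≥ π'(v)/20} ≤ 1/(20n), and for each v with π'(v) < ε/2, Pr{|π̃(v) − π'(v)| ≥ ε/20} ≤ 1/(20n). -/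
/-!
Bennett–Chernoff argument. By convexity of `exp`, a variable with values in `[0, r]` and mean `μ`
has `E[exp (t X)] ≤ exp (μ / r * (exp (t r) - 1))`; for a sum of `k` independent copies, Markov's
inequality at `t = ± s / r` bounds each tail of the empirical mean by
`exp (-(k / r) * (s δ - μ (exp s - 1 - s)))`. With `s = 1 / 20` and
`exp (1 / 20) - 1 - 1 / 20 ≤ 23 / 18000`, both regimes of the theorem give an exponent of at least
`k ε / (3200 r) ≥ log (40 n)`, so each deviation probability is at most `2 / (40 n)`.
-/

open MeasureTheory ProbabilityTheory Real Set

lemma exp_sub_one_sub_one_div_twenty_le : exp (1 / 20) - 1 - 1 / 20 ≤ 23 / 18000 := by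
  have h := abs_le.1 (exp_bound (x := 1 / 20) (by norm_num [abs_of_pos]) (n := 3) (by norm_num))
  norm_num [Finset.sum_range_succ, Nat.factorial] at h
  linarith [h.2]

lemma exp_neg_sub_one_add_le {s : ℝ} (hs : 0 ≤ s) : exp (-s) - 1 + s ≤ exp s - 1 - s := by
  have := self_le_sinh_iff.2 hs
  rw [sinh_eq] at this
  linarith

lemma exp_mul_le_one_add_of_mem_Icc {r y : ℝ} (t : ℝ) (hr : 0 < r) (hy : y ∈ Icc 0 r) :
    exp (t * y) ≤ 1 + y / r * (exp (t * r) - 1) := by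
  have h0 : 0 ≤ y / r := div_nonneg hy.1 hr.le
  have h1 : y / r ≤ 1 := (div_le_one hr).2 hy.2
  have := convexOn_exp.2 (mem_univ 0) (mem_univ (t * r)) (sub_nonneg.2 h1) h0 (by ring)
  simp only [smul_eq_mul, mul_zero, zero_add, exp_zero, mul_one] at this
  rw [show y / r * (t * r) = t * y by field_simp] at this
  linarith

section

variable {Ω : Type*} {m0 : MeasurableSpace Ω} {P : Measure Ω} [IsProbabilityMeasure P]

lemma mgf_le_exp_of_mem_Icc {Y : Ω → ℝ} {r : ℝ} (hr : 0 < r) (hY : AEMeasurable Y P)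
    (hb : ∀ ω, Y ω ∈ Icc 0 r) (t : ℝ) :
    mgf Y P t ≤ exp (P[Y] / r * (exp (t * r) - 1)) := by
  have hYint : Integrable Y P := .of_mem_Icc 0 r hY (ae_of_all _ hb)
  calc mgf Y P t ≤ ∫ ω, 1 + Y ω / r * (exp (t * r) - 1) ∂P :=
        integral_mono (integrable_exp_mul_of_mem_Icc hY (ae_of_all _ hb))
          ((integrable_const 1).add ((hYint.div_const r).mul_const _))
          fun ω => exp_mul_le_one_add_of_mem_Icc t hr (hb ω)
    _ = 1 + P[Y] / r * (exp (t * r) - 1) := by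
        rw [integral_add (integrable_const 1) ((hYint.div_const r).mul_const _), integral_const,
          integral_mul_const, integral_div]
        simp
    _ ≤ exp (P[Y] / r * (exp (t * r) - 1)) := by
        linarith [add_one_le_exp (P[Y] / r * (exp (t * r) - 1))]

variable {ι : Type*} [Fintype ι] {X : ι → Ω → ℝ} {r μ : ℝ}

lemma mgf_sum_le_of_mem_Icc (hr : 0 < r) (hmeas : ∀ i, AEMeasurable (X i) P)
    (hindep : iIndepFun X P) (hbdd : ∀ i ω, X i ω ∈ Icc 0 r) (hmean : ∀ i, P[X i] = μ)
    (t : ℝ) :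
    mgf (∑ i, X i) P t ≤ exp (Fintype.card ι * (μ / r * (exp (t * r) - 1))) := by
  rw [hindep.mgf_sum₀ hmeas, ← Finset.card_univ, ← nsmul_eq_mul, exp_nsmul,
    ← Finset.prod_const]
  exact Finset.prod_le_prod (fun i _ => mgf_nonneg)
    fun i _ => hmean i ▸ mgf_le_exp_of_mem_Icc hr (hmeas i) (hbdd i) t

lemma sum_apply_mem_Icc (hbdd : ∀ i ω, X i ω ∈ Icc 0 r) (ω : Ω) :
    (∑ i, X i) ω ∈ Icc 0 (Fintype.card ι * r) := by
  rw [Finset.sum_apply]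
  refine ⟨Finset.sum_nonneg fun i _ => (hbdd i ω).1, ?_⟩
  have := Finset.sum_le_card_nsmul Finset.univ (X · ω) r fun i _ => (hbdd i ω).2
  rwa [Finset.card_univ, nsmul_eq_mul] at this

lemma measureReal_sum_ge_le (hr : 0 < r) (hmeas : ∀ i, AEMeasurable (X i) P)
    (hindep : iIndepFun X P) (hbdd : ∀ i ω, X i ω ∈ Icc 0 r) (hmean : ∀ i, P[X i] = μ)
    {s : ℝ} (hs : 0 ≤ s) (δ : ℝ) :
    P.real {ω | Fintype.card ι * (μ + δ) ≤ ∑ i, X i ω} ≤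
      exp (-(Fintype.card ι / r) * (s * δ - μ * (exp s - 1 - s))) := by
  have hint := integrable_exp_mul_of_mem_Icc (t := s / r)
    (Finset.aemeasurable_sum _ fun i _ => hmeas i) (ae_of_all P (sum_apply_mem_Icc hbdd))
  have h := measure_ge_le_exp_mul_mgf (Fintype.card ι * (μ + δ)) (div_nonneg hs hr.le) hint
  simp only [Finset.sum_apply] at h
  refine h.trans ((mul_le_mul_of_nonneg_left
    (mgf_sum_le_of_mem_Icc hr hmeas hindep hbdd hmean _) (exp_pos _).le).trans_eq ?_)
  rw [← exp_add, div_mul_cancel₀ s hr.ne']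
  congr 1
  field_simp
  ring

lemma measureReal_sum_le_le (hr : 0 < r) (hmeas : ∀ i, AEMeasurable (X i) P)
    (hindep : iIndepFun X P) (hbdd : ∀ i ω, X i ω ∈ Icc 0 r) (hmean : ∀ i, P[X i] = μ)
    {s : ℝ} (hs : 0 ≤ s) (δ : ℝ) :
    P.real {ω | ∑ i, X i ω ≤ Fintype.card ι * (μ - δ)} ≤
      exp (-(Fintype.card ι / r) * (s * δ - μ * (exp (-s) - 1 + s))) := by
  have hint := integrable_exp_mul_of_mem_Icc (t := -(s / r))
    (Finset.aemeasurable_sum _ fun i _ => hmeas i) (ae_of_all P (sum_apply_mem_Icc hbdd))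
  have h := measure_le_le_exp_mul_mgf (Fintype.card ι * (μ - δ))
    (neg_nonpos.2 (div_nonneg hs hr.le)) hint
  simp only [Finset.sum_apply] at h
  refine h.trans ((mul_le_mul_of_nonneg_left
    (mgf_sum_le_of_mem_Icc hr hmeas hindep hbdd hmean _) (exp_pos _).le).trans_eq ?_)
  rw [← exp_add, show -(s / r) * r = -s by field_simp]
  congr 1
  field_simp
  ring

lemma measure_abs_mean_sub_ge_le [Nonempty ι] (hr : 0 < r) (hmeas : ∀ i, AEMeasurable (X i) P)
    (hindep : iIndepFun X P) (hbdd : ∀ i ω, X i ω ∈ Icc 0 r) (hmean : ∀ i, P[X i] = μ)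
    {s : ℝ} (hs : 0 ≤ s) (δ : ℝ) :
    P {ω | δ ≤ |(∑ i, X i ω) / Fintype.card ι - μ|} ≤
      ENNReal.ofReal (2 * exp (-(Fintype.card ι / r) * (s * δ - μ * (exp s - 1 - s)))) := by
  set k : ℝ := (Fintype.card ι : ℝ)
  have hk : 0 < k := Nat.cast_pos.2 Fintype.card_pos
  have hμ : 0 ≤ μ := hmean (Classical.arbitrary ι) ▸ integral_nonneg fun ω => (hbdd _ ω).1
  have hsub : {ω | δ ≤ |(∑ i, X i ω) / k - μ|} ⊆
      {ω | k * (μ + δ) ≤ ∑ i, X i ω} ∪ {ω | ∑ i, X i ω ≤ k * (μ - δ)} := by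
    rintro ω (hω : δ ≤ |(∑ i, X i ω) / k - μ|)
    rcases le_abs'.1 hω with h | h
    · exact Or.inr ((div_le_iff₀' hk).1 (by linarith))
    · exact Or.inl ((le_div_iff₀' hk).1 (by linarith))
  have hlower : exp (-(k / r) * (s * δ - μ * (exp (-s) - 1 + s))) ≤
      exp (-(k / r) * (s * δ - μ * (exp s - 1 - s))) := by
    have := mul_le_mul_of_nonneg_left (exp_neg_sub_one_add_le hs) hμ
    have hkr : 0 ≤ k / r := by positivity
    gcongr exp ?_
    nlinarith
  rw [← ofReal_measureReal]
  refine ENNReal.ofReal_le_ofReal ?_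
  calc P.real {ω | δ ≤ |(∑ i, X i ω) / k - μ|}
      ≤ P.real ({ω | k * (μ + δ) ≤ ∑ i, X i ω} ∪ {ω | ∑ i, X i ω ≤ k * (μ - δ)}) :=
        measureReal_mono hsub
    _ ≤ P.real {ω | k * (μ + δ) ≤ ∑ i, X i ω} + P.real {ω | ∑ i, X i ω ≤ k * (μ - δ)} :=
        measureReal_union_le _ _
    _ ≤ 2 * exp (-(k / r) * (s * δ - μ * (exp s - 1 - s))) := by
        linarith [measureReal_sum_ge_le hr hmeas hindep hbdd hmean hs δ,
          measureReal_sum_le_le hr hmeas hindep hbdd hmean hs δ]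

end

theorem monte_carlo_concentration_general {Ω : Type*} {m0 : MeasurableSpace Ω}
    (P : Measure Ω) [IsProbabilityMeasure P]
    (α ε πp : ℝ) (i' n : ℕ)
    (hα1 : α < 1) (hε : 0 < ε) (hn : 1 ≤ n)
    (nr : ℕ) (hnr : nr = ⌈3200 * (1 - α) ^ i' * Real.log (40 * n) / ε⌉₊)
    (X : Fin nr → Ω → ℝ)
    (hmeas : ∀ i, Measurable (X i))
    (hindep : ProbabilityTheory.iIndepFun X P)
    (hbdd : ∀ i ω, 0 ≤ X i ω ∧ X i ω ≤ (1 - α) ^ i')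
    (hmean : ∀ i, (∫ ω, X i ω ∂P) = πp) :
    (ε / 2 ≤ πp →
      P {ω | πp / 20 ≤ |(∑ i, X i ω) / (nr : ℝ) - πp|} ≤
        ENNReal.ofReal (1 / (20 * n))) ∧
    (πp < ε / 2 →
      P {ω | ε / 20 ≤ |(∑ i, X i ω) / (nr : ℝ) - πp|} ≤
        ENNReal.ofReal (1 / (20 * n))) := by
  set r : ℝ := (1 - α) ^ i'
  set L : ℝ := log (40 * n)
  have hr : 0 < r := pow_pos (by linarith) _
  have h40n : 1 < (40 * n : ℝ) := by norm_cast; omega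
  have hL : 0 < L := log_pos h40n
  have hnr_pos : 0 < nr := hnr ▸ Nat.ceil_pos.2 (by positivity)
  have : Nonempty (Fin nr) := ⟨⟨0, hnr_pos⟩⟩
  have hπ0 : 0 ≤ πp := hmean ⟨0, hnr_pos⟩ ▸ integral_nonneg fun ω => (hbdd _ ω).1
  have hsamples : L ≤ nr / r * (ε / 3200) := by
    have := (div_le_iff₀ hε).1 (hnr ▸ Nat.le_ceil (3200 * r * L / ε))
    rw [div_mul_div_comm, le_div_iff₀ (by positivity)]
    linarith
  have tail (δ : ℝ) (hδ : ε / 3200 ≤ δ / 20 - πp * (23 / 18000)) :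
      P {ω | δ ≤ |(∑ i, X i ω) / (nr : ℝ) - πp|} ≤ ENNReal.ofReal (1 / (20 * n)) := by
    have h := measure_abs_mean_sub_ge_le hr (fun i => (hmeas i).aemeasurable) hindep hbdd hmean
      (s := 1 / 20) (by norm_num) δ
    rw [Fintype.card_fin] at h
    refine h.trans (ENNReal.ofReal_le_ofReal ?_)
    have hexp := mul_le_mul_of_nonneg_left exp_sub_one_sub_one_div_twenty_le hπ0
    have hnr_r : 0 ≤ nr / r := by positivity
    calc 2 * exp (-(nr / r) * (1 / 20 * δ - πp * (exp (1 / 20) - 1 - 1 / 20)))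
        ≤ 2 * exp (-L) := by gcongr; nlinarith
      _ = 1 / (20 * n) := by
        rw [exp_neg, exp_log (by linarith)]
        field_simp
        ring
  exact ⟨fun h => tail _ (by linarith), fun h => tail _ (by linarith)⟩

theorem monte_carlo_concentration {Ω : Type*} {m0 : MeasurableSpace Ω}
    (P : Measure Ω) [IsProbabilityMeasure P]
    (α ε πp : ℝ) (i' n : ℕ)
    (hα0 : 0 < α) (hα1 : α < 1) (hε : 0 < ε) (hn : 1 ≤ n)
    (nr : ℕ) (hnr : nr = ⌈3200 * (1 - α) ^ i' * Real.log (40 * n) / ε⌉₊)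
    (X : Fin nr → Ω → ℝ)
    (hmeas : ∀ i, Measurable (X i))
    (hindep : ProbabilityTheory.iIndepFun X P)
    (hbdd : ∀ i ω, 0 ≤ X i ω ∧ X i ω ≤ (1 - α) ^ i')
    (hmean : ∀ i, (∫ ω, X i ω ∂P) = πp) :
    (ε / 2 ≤ πp →
      P {ω | πp / 20 ≤ |(∑ i, X i ω) / (nr : ℝ) - πp|} ≤
        ENNReal.ofReal (1 / (20 * n))) ∧
    (πp < ε / 2 →
      P {ω | ε / 20 ≤ |(∑ i, X i ω) / (nr : ℝ) - πp|} ≤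
        ENNReal.ofReal (1 / (20 * n))) :=
  monte_carlo_concentration_general (m0 := m0) P α ε πp i' n hα1 hε hn nr hnr X hmeas hindep hbdd
    hmean
end
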